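/- arXiv:1610.02194 — 2 statements merged into one kernel-verified Lean document; each statement's English description precedes it below -/
import Mathlib

section
/- With ψ the relativised collapsing function: if ξ is a limit ordinal, then ψ(ξ) = sup_{η < ξ} ψ(η). -/
open Ordinal

/-- The binary Veblen function: `veblen 0 β = ω ^ β`, and for `α > 0`,
`veblen α` enumerates the common fixed points of `veblen γ` for `γ < α`. -/
noncomputable def veblen : Ordinal → Ordinal → Ordinal :=
  WellFounded.fix Ordinal.lt_wf
    (fun α ih => if α = 0 then fun β => omega0 ^ β
      else (derivFamily (familyOfBFamily α (fun ξ h => ih ξ h)) : Ordinal.{0} → Ordinal.{0}))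

/-- The set of strongly critical ordinals. -/
def StronglyCritical (γ : Ordinal) : Prop := _root_.veblen γ 0 = γ

/-- `Gamma β` is the `β`-th strongly critical ordinal. -/
noncomputable def Gamma : Ordinal → Ordinal :=
  enumOrd {γ | StronglyCritical γ}

/-- The least uncountable cardinal (as an ordinal) greater than `θ`. -/
noncomputable def OmegaB (θ : Ordinal) : Ordinal :=
  sInf {o | θ < o ∧ o.card.ord = o ∧ Cardinal.aleph0 < o.card}

/-- Closure of `{0, Ω} ∪ {Γ_β : β ≤ θ}` under `+`, `veblen` and the
given partial collapsing function `f` on arguments below `α`. -/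
def closB (θ α : Ordinal) (f : ∀ ξ, ξ < α → Ordinal) : Set Ordinal :=
  ⋂₀ {S : Set Ordinal |
      0 ∈ S ∧ OmegaB θ ∈ S ∧ (∀ β ≤ θ, Gamma β ∈ S) ∧
      (∀ x ∈ S, ∀ y ∈ S, x + y ∈ S) ∧
      (∀ x ∈ S, ∀ y ∈ S, _root_.veblen x y ∈ S) ∧
      (∀ ξ (h : ξ < α), ξ ∈ S → f ξ h ∈ S)}

/-- The relativised collapsing function `ψ_θ`. -/
noncomputable def psiB (θ : Ordinal) : Ordinal → Ordinal :=
  WellFounded.fix Ordinal.lt_wf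
    (fun α ih => sInf {β | β ∉ closB θ α (fun ξ h => ih ξ h)})

/-- The relativised collapsing hierarchy `B_θ(α)`. -/
def BB (θ α : Ordinal) : Set Ordinal :=
  closB θ α (fun ξ _ => psiB θ ξ)

/-- The least strongly critical ordinal strictly above `δ`. -/
noncomputable def gammaSucc (δ : Ordinal) : Ordinal :=
  sInf {γ | δ < γ ∧ StronglyCritical γ}

/-!
Monotonicity of `ψ` gives `sup_{η<ξ} ψ(η) ≤ ψ(ξ)`, so it suffices that `s := sup_{η<ξ} ψ(η)` is
not in `B(ξ)`. Every `B(α)` lies in the closure of the generators under `+`, `φ` and all of `ψ`, a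
set of size `< |Ω|`; hence one `β < Ω` bounds every `ψ(η)`, and `s < Ω`. At a limit `ξ`,
`B(ξ) = ⋃_{η<ξ} B(η)`. Below `Ω` each `B(η)` is downward closed: by the Veblen normal form an
ordinal is generated under `+` and `φ` from the strongly critical ordinals below it, and these lie
in `B(η)` as soon as the ordinal is below some `x ∈ B(η)` with `x < Ω`, because a strongly critical
ordinal is principal for both `+` and `φ`. So `s ∈ B(ξ)` would give `s ∈ B(η)` for some `η < ξ`
and then `ψ(η) ≤ s` would lie in `B(η)`, contradicting the definition of `ψ(η)`.
-/

set_option linter.deprecated false in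
theorem veblen_eq_ordinalVeblen : _root_.veblen = Ordinal.veblen.{0} := by
  funext o
  induction o using WellFoundedLT.induction with
  | ind o ih =>
    rw [_root_.veblen, WellFounded.fix_eq]
    split_ifs with ho
    · simp [ho]
    · have hfam : familyOfBFamily o (fun ξ _ => _root_.veblen ξ) =
          fun i => Ordinal.veblen (typein (· < ·) i) :=
        funext fun i => ih _ (typein_lt_self i)
      change derivFamily (familyOfBFamily o (fun ξ _ => _root_.veblen ξ)) = _
      rw [hfam, Ordinal.veblen_of_ne_zero ho, derivFamily_eq_enumOrd (fun _ => isNormal_veblen _),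
        derivFamily_eq_enumOrd (fun _ => isNormal_veblen _)]
      congr 1
      ext a
      simp only [Set.mem_iInter, Function.mem_fixedPoints, Function.IsFixedPt, Subtype.forall,
        Set.mem_Iio]
      refine ⟨fun h b hb => ?_, fun h i => h _ (typein_lt_self i)⟩
      obtain ⟨i, rfl⟩ := typein_surj (α := o.ToType) (· < ·) (hb.trans_eq (type_toType o).symm)
      exact h i

theorem Gamma_eq_gamma : Gamma = gamma := by
  have hSC : {γ | StronglyCritical γ} = Set.range gamma := by
    ext γ
    rw [mem_range_gamma, ← veblen_eq_ordinalVeblen]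
    rfl
  rw [Gamma, hSC, enumOrd_range strictMono_gamma]

namespace Ordinal

theorem IsPrincipal.le_or_le {op : Ordinal → Ordinal → Ordinal} {o a b : Ordinal}
    (ho : IsPrincipal op o) (h : o ≤ op a b) : o ≤ a ∨ o ≤ b := by
  by_contra! hlt
  exact (ho hlt.1 hlt.2).not_ge h

theorem isPrincipal_add_gamma (o : Ordinal) : IsPrincipal (· + ·) (Γ_ o) := by
  obtain ⟨x, hx⟩ := veblen_mem_range_opow (Γ_ o) 0
  rw [← veblen_gamma_zero, ← hx]
  exact isPrincipal_add_omega0_opow x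

theorem isPrincipal_veblen_gamma (o : Ordinal) : IsPrincipal Ordinal.veblen (Γ_ o) := by
  intro a b ha hb
  calc Ordinal.veblen a b < Ordinal.veblen a (Γ_ o) := veblen_lt_veblen_iff_right.2 hb
    _ = Γ_ o := by simpa using veblen_veblen_of_lt ha 0

/-- Veblen normal form, in the form of an induction principle. -/
theorem mem_of_forall_gamma_le_mem {S : Set Ordinal} (zero_mem : 0 ∈ S)
    (add_mem : ∀ x ∈ S, ∀ y ∈ S, x + y ∈ S)
    (veblen_mem : ∀ x ∈ S, ∀ y ∈ S, Ordinal.veblen x y ∈ S)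
    {δ : Ordinal} (h : ∀ o, Γ_ o ≤ δ → Γ_ o ∈ S) : δ ∈ S := by
  induction δ using WellFoundedLT.induction with
  | ind δ ih =>
  have mem_of_lt : ∀ a < δ, a ∈ S := fun a ha => ih a ha fun o ho => h o (ho.trans ha.le)
  by_cases hδ : δ ∈ Set.range gamma
  · obtain ⟨o, rfl⟩ := hδ
    exact h o le_rfl
  by_cases hprin : IsPrincipal (· + ·) δ
  · obtain rfl | ⟨x, rfl⟩ := isPrincipal_add_iff_zero_or_omega0_opow.1 hprin
    · exact zero_mem
    dsimp only at hδ mem_of_lt ⊢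
    rw [← veblen_invVeblen₁_invVeblen₂]
    refine veblen_mem _ (mem_of_lt _ ?_) _ (mem_of_lt _ (invVeblen₂_lt x))
    rcases (right_le_opow x one_lt_omega0).lt_or_eq with hx | hx
    · exact (invVeblen₁_le x).trans_lt hx
    · rw [← hx] at hδ ⊢
      exact invVeblen₁_lt_iff.2 ⟨hx ▸ (opow_pos x omega0_pos).ne', hδ⟩
  · obtain ⟨a, ha, b, hb, rfl⟩ : ∃ a < δ, ∃ b < δ, a + b = δ := by
      simpa [isPrincipal_add_iff_add_lt_ne_self] using hprin
    exact add_mem _ (mem_of_lt a ha) _ (mem_of_lt b hb)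

end Ordinal

structure IsBClosed (θ α : Ordinal) (f : ∀ ξ, ξ < α → Ordinal) (S : Set Ordinal) : Prop where
  zero_mem : 0 ∈ S
  omegaB_mem : OmegaB θ ∈ S
  gamma_mem : ∀ β ≤ θ, Γ_ β ∈ S
  add_mem : ∀ x ∈ S, ∀ y ∈ S, x + y ∈ S
  veblen_mem : ∀ x ∈ S, ∀ y ∈ S, Ordinal.veblen x y ∈ S
  collapse_mem : ∀ ξ (h : ξ < α), ξ ∈ S → f ξ h ∈ S

section closB

variable {θ α : Ordinal} {f : ∀ ξ, ξ < α → Ordinal}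

theorem closB_eq_sInter : closB θ α f = ⋂₀ {S | IsBClosed θ α f S} := by
  simp only [closB, veblen_eq_ordinalVeblen, Gamma_eq_gamma]
  congr 1
  ext S
  exact ⟨fun ⟨h₀, hΩ, hΓ, hadd, hφ, hf⟩ => ⟨h₀, hΩ, hΓ, hadd, hφ, hf⟩,
    fun ⟨h₀, hΩ, hΓ, hadd, hφ, hf⟩ => ⟨h₀, hΩ, hΓ, hadd, hφ, hf⟩⟩

theorem closB_subset {S : Set Ordinal} (hS : IsBClosed θ α f S) : closB θ α f ⊆ S :=
  closB_eq_sInter ▸ Set.sInter_subset_of_mem hS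

theorem isBClosed_closB : IsBClosed θ α f (closB θ α f) := by
  rw [closB_eq_sInter]
  refine ⟨?_, ?_, ?_, ?_, ?_, ?_⟩ <;> simp only [Set.mem_sInter]
  · exact fun S hS => hS.zero_mem
  · exact fun S hS => hS.omegaB_mem
  · exact fun β hβ S hS => hS.gamma_mem β hβ
  · exact fun x hx y hy S hS => hS.add_mem x (hx S hS) y (hy S hS)
  · exact fun x hx y hy S hS => hS.veblen_mem x (hx S hS) y (hy S hS)
  · exact fun ξ h hξ S hS => hS.collapse_mem ξ h (hξ S hS)

end closB

theorem IsBClosed.mono {θ α α' : Ordinal} {g : Ordinal → Ordinal} {S : Set Ordinal}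
    (hS : IsBClosed θ α' (fun ξ _ => g ξ) S) (hα : α ≤ α') : IsBClosed θ α (fun ξ _ => g ξ) S :=
  { hS with collapse_mem := fun ξ hξ => hS.collapse_mem ξ (hξ.trans_le hα) }

theorem isBClosed_BB (θ α : Ordinal) : IsBClosed θ α (fun ξ _ => psiB θ ξ) (BB θ α) :=
  isBClosed_closB

theorem BB_mono {θ α α' : Ordinal} (hα : α ≤ α') : BB θ α ⊆ BB θ α' :=
  closB_subset ((isBClosed_BB θ α').mono hα)

section veblenClosure

open Cardinal

universe u

variable {g : Ordinal.{u} → Ordinal.{u}} {A S : Set Ordinal.{u}}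

def closureStep (g : Ordinal.{u} → Ordinal.{u}) (S : Set Ordinal.{u}) : Set Ordinal.{u} :=
  S ∪ Set.image2 (· + ·) S S ∪ Set.image2 Ordinal.veblen S S ∪ g '' S

def veblenClosure (g : Ordinal.{u} → Ordinal.{u}) (A : Set Ordinal.{u}) : Set Ordinal.{u} :=
  ⋃ n : ℕ, (closureStep g)^[n] A

theorem subset_closureStep : S ⊆ closureStep g S :=
  fun _ hx => Or.inl (Or.inl (Or.inl hx))

theorem mk_closureStep_le {κ : Cardinal.{u + 1}} (hκ : ℵ₀ ≤ κ) (hS : #S ≤ κ) :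
    #(closureStep g S) ≤ κ := by
  have mk_image2_le_of_le (op : Ordinal → Ordinal → Ordinal) : #(Set.image2 op S S) ≤ κ :=
    mk_image2_le.trans ((mul_le_mul' hS hS).trans (mul_eq_self hκ).le)
  refine (mk_union_le _ _).trans (add_le_of_le hκ ?_ (mk_image_le.trans hS))
  refine (mk_union_le _ _).trans (add_le_of_le hκ ?_ (mk_image2_le_of_le _))
  exact (mk_union_le _ _).trans (add_le_of_le hκ hS (mk_image2_le_of_le _))

theorem subset_veblenClosure : A ⊆ veblenClosure g A :=
  Set.subset_iUnion (fun n => (closureStep g)^[n] A) 0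

theorem closureStep_iterate_subset_veblenClosure (n : ℕ) :
    closureStep g ((closureStep g)^[n] A) ⊆ veblenClosure g A := by
  rw [← Function.iterate_succ_apply' (closureStep g)]
  exact Set.subset_iUnion (fun n => (closureStep g)^[n] A) (n + 1)

theorem exists_iterate_of_mem_veblenClosure {x y : Ordinal} (hx : x ∈ veblenClosure g A)
    (hy : y ∈ veblenClosure g A) :
    ∃ n, x ∈ (closureStep g)^[n] A ∧ y ∈ (closureStep g)^[n] A := by
  have hmono : Monotone fun n => (closureStep g)^[n] A :=
    monotone_nat_of_le_succ fun n => by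
      rw [Function.iterate_succ_apply']
      exact subset_closureStep
  obtain ⟨m, hm⟩ := Set.mem_iUnion.1 hx
  obtain ⟨n, hn⟩ := Set.mem_iUnion.1 hy
  exact ⟨max m n, hmono (le_max_left m n) hm, hmono (le_max_right m n) hn⟩

theorem add_mem_veblenClosure {x y : Ordinal} (hx : x ∈ veblenClosure g A)
    (hy : y ∈ veblenClosure g A) : x + y ∈ veblenClosure g A := by
  obtain ⟨n, hxn, hyn⟩ := exists_iterate_of_mem_veblenClosure hx hy
  exact closureStep_iterate_subset_veblenClosure n (Or.inl (Or.inl (Or.inr ⟨x, hxn, y, hyn, rfl⟩)))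

theorem veblen_mem_veblenClosure {x y : Ordinal} (hx : x ∈ veblenClosure g A)
    (hy : y ∈ veblenClosure g A) : Ordinal.veblen x y ∈ veblenClosure g A := by
  obtain ⟨n, hxn, hyn⟩ := exists_iterate_of_mem_veblenClosure hx hy
  exact closureStep_iterate_subset_veblenClosure n (Or.inl (Or.inr ⟨x, hxn, y, hyn, rfl⟩))

theorem apply_mem_veblenClosure {x : Ordinal} (hx : x ∈ veblenClosure g A) :
    g x ∈ veblenClosure g A := by
  obtain ⟨n, hxn⟩ := Set.mem_iUnion.1 hx
  exact closureStep_iterate_subset_veblenClosure n (Or.inr ⟨x, hxn, rfl⟩)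

theorem mk_veblenClosure_le {κ : Cardinal.{u + 1}} (hκ : ℵ₀ ≤ κ) (hA : #A ≤ κ) :
    #(veblenClosure g A) ≤ κ := by
  have mk_iterate_le (n : ℕ) : #((closureStep g)^[n] A) ≤ κ := by
    induction n with
    | zero => exact hA
    | succ n ih =>
      rw [Function.iterate_succ_apply']
      exact mk_closureStep_le hκ ih
  have := mk_iUnion_le_lift.{u + 1, 0} fun n : ℕ => (closureStep g)^[n] A
  simp only [Cardinal.lift_uzero, mk_nat, lift_aleph0] at this
  exact this.trans ((mul_le_mul' hκ (ciSup_le' mk_iterate_le)).trans (mul_eq_self hκ).le)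

end veblenClosure

theorem omegaB_spec (θ : Ordinal) :
    θ < OmegaB θ ∧ (OmegaB θ).card.ord = OmegaB θ ∧ Cardinal.aleph0 < (OmegaB θ).card := by
  refine csInf_mem (s := {o | θ < o ∧ o.card.ord = o ∧ Cardinal.aleph0 < o.card})
    ⟨(Order.succ (Cardinal.aleph0 ⊔ θ.card)).ord, ?_, ?_, ?_⟩
  · exact Cardinal.lt_ord.2 (le_sup_right.trans_lt (Order.lt_succ _))
  · rw [Cardinal.card_ord]
  · rw [Cardinal.card_ord]
    exact le_sup_left.trans_lt (Order.lt_succ _)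

theorem max_aleph0_card_succ_lt_card_omegaB (θ : Ordinal) :
    Cardinal.aleph0 ⊔ (Order.succ θ).card < (OmegaB θ).card := by
  obtain ⟨hθ, hord, hinf⟩ := omegaB_spec θ
  refine sup_lt_iff.2 ⟨hinf, Cardinal.lt_ord.1 ?_⟩
  rw [hord]
  exact (hord ▸ Cardinal.isSuccLimit_ord hinf.le).succ_lt hθ

section psiClosure

open Cardinal

variable (θ : Ordinal)

def psiClosure : Set Ordinal :=
  veblenClosure (psiB θ) ({0, OmegaB θ} ∪ Γ_ '' Set.Iic θ)

theorem isBClosed_psiClosure (α : Ordinal) :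
    IsBClosed θ α (fun ξ _ => psiB θ ξ) (psiClosure θ) where
  zero_mem := subset_veblenClosure (Or.inl (Or.inl rfl))
  omegaB_mem := subset_veblenClosure (Or.inl (Or.inr rfl))
  gamma_mem β hβ := subset_veblenClosure (Or.inr ⟨β, hβ, rfl⟩)
  add_mem _ hx _ hy := add_mem_veblenClosure hx hy
  veblen_mem _ hx _ hy := veblen_mem_veblenClosure hx hy
  collapse_mem _ _ hξ := apply_mem_veblenClosure hξ

theorem BB_subset_psiClosure (α : Ordinal) : BB θ α ⊆ psiClosure θ :=
  closB_subset (isBClosed_psiClosure θ α)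

theorem mk_psiClosure_le : #(psiClosure θ) ≤ lift (ℵ₀ ⊔ (Order.succ θ).card) := by
  have hκ : ℵ₀ ≤ lift.{1} (ℵ₀ ⊔ (Order.succ θ).card) := aleph0_le_lift.2 le_sup_left
  refine mk_veblenClosure_le hκ ((mk_union_le _ _).trans (add_le_of_le hκ ?_ ?_))
  · exact (Set.toFinite _).lt_aleph0.le.trans hκ
  · rw [← Order.Iio_succ]
    exact mk_image_le.trans ((Cardinal.mk_Iio_ordinal _).trans_le (lift_le.2 le_sup_right))

theorem exists_lt_omegaB_notMem_psiClosure : ∃ β < OmegaB θ, β ∉ psiClosure θ := by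
  by_contra! h
  have hmk := (mk_le_mk_of_subset (s := Set.Iio (OmegaB θ)) h).trans (mk_psiClosure_le θ)
  rw [Cardinal.mk_Iio_ordinal, Cardinal.lift_le] at hmk
  exact hmk.not_gt (max_aleph0_card_succ_lt_card_omegaB θ)

end psiClosure

section psiB

variable {θ α β δ : Ordinal}

theorem psiB_eq (θ α : Ordinal) : psiB θ α = sInf (BB θ α)ᶜ :=
  WellFounded.fix_eq _ _ _

theorem psiB_le_of_notMem (h : β ∉ BB θ α) : psiB θ α ≤ β :=
  psiB_eq θ α ▸ csInf_le' h

theorem mem_BB_of_lt_psiB (h : δ < psiB θ α) : δ ∈ BB θ α := by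
  by_contra hδ
  exact (psiB_le_of_notMem hδ).not_gt h

theorem exists_lt_omegaB_forall_psiB_le (θ : Ordinal) : ∃ β < OmegaB θ, ∀ α, psiB θ α ≤ β := by
  obtain ⟨β, hβΩ, hβ⟩ := exists_lt_omegaB_notMem_psiClosure θ
  exact ⟨β, hβΩ, fun α => psiB_le_of_notMem fun h => hβ (BB_subset_psiClosure θ α h)⟩

theorem psiB_notMem_BB (θ α : Ordinal) : psiB θ α ∉ BB θ α := by
  obtain ⟨β, -, hβ⟩ := exists_lt_omegaB_notMem_psiClosure θ
  rw [psiB_eq]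
  exact csInf_mem (s := (BB θ α)ᶜ) ⟨β, fun h => hβ (BB_subset_psiClosure θ α h)⟩

theorem psiB_mono (θ : Ordinal) : Monotone (psiB θ) :=
  fun _ α' hα => psiB_le_of_notMem fun h => psiB_notMem_BB θ α' (BB_mono hα h)

end psiB

theorem BB_subset_biUnion_of_isSuccLimit {θ ξ : Ordinal} (hξ : Order.IsSuccLimit ξ) :
    BB θ ξ ⊆ ⋃ η < ξ, BB θ η := by
  have mem_of_mem₂ {x y : Ordinal} (hx : x ∈ ⋃ η < ξ, BB θ η) (hy : y ∈ ⋃ η < ξ, BB θ η) :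
      ∃ η < ξ, x ∈ BB θ η ∧ y ∈ BB θ η := by
    obtain ⟨η₁, hη₁, hx⟩ := Set.mem_iUnion₂.1 hx
    obtain ⟨η₂, hη₂, hy⟩ := Set.mem_iUnion₂.1 hy
    exact ⟨max η₁ η₂, max_lt hη₁ hη₂, BB_mono (le_max_left _ _) hx, BB_mono (le_max_right _ _) hy⟩
  have B₀ := isBClosed_BB θ 0
  refine closB_subset
    { zero_mem := Set.mem_biUnion hξ.bot_lt B₀.zero_mem
      omegaB_mem := Set.mem_biUnion hξ.bot_lt B₀.omegaB_mem
      gamma_mem := fun β hβ => Set.mem_biUnion hξ.bot_lt (B₀.gamma_mem β hβ)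
      add_mem := fun x hx y hy => ?_
      veblen_mem := fun x hx y hy => ?_
      collapse_mem := fun ζ hζ hmem => ?_ }
  · obtain ⟨η, hη, hx, hy⟩ := mem_of_mem₂ hx hy
    exact Set.mem_biUnion hη ((isBClosed_BB θ η).add_mem x hx y hy)
  · obtain ⟨η, hη, hx, hy⟩ := mem_of_mem₂ hx hy
    exact Set.mem_biUnion hη ((isBClosed_BB θ η).veblen_mem x hx y hy)
  · obtain ⟨η, hη, hmem⟩ := Set.mem_iUnion₂.1 hmem
    have hζη : ζ < max η (Order.succ ζ) := (Order.lt_succ ζ).trans_le (le_max_right _ _)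
    exact Set.mem_biUnion (max_lt hη (hξ.succ_lt hζ))
      ((isBClosed_BB θ _).collapse_mem ζ hζη (BB_mono (le_max_left _ _) hmem))

theorem gamma_mem_BB_of_le {θ η x o : Ordinal} (hx : x ∈ BB θ η) (hxΩ : x < OmegaB θ)
    (ho : Γ_ o ≤ x) : Γ_ o ∈ BB θ η := by
  have B := isBClosed_BB θ η
  suffices BB θ η ⊆ {x | x ∈ BB θ η ∧ (x < OmegaB θ → ∀ o, Γ_ o ≤ x → Γ_ o ∈ BB θ η)} from
    (this hx).2 hxΩ o ho
  refine closB_subset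
    { zero_mem := ⟨B.zero_mem, fun _ o ho => absurd ho gamma_pos.not_ge⟩
      omegaB_mem := ⟨B.omegaB_mem, fun h => absurd h (lt_irrefl _)⟩
      gamma_mem := fun β hβ => ⟨B.gamma_mem β hβ, fun _ o ho =>
        B.gamma_mem o ((gamma_le_gamma.1 ho).trans hβ)⟩
      add_mem := fun x ⟨hx, hx'⟩ y ⟨hy, hy'⟩ => ⟨B.add_mem x hx y hy, fun hlt o ho => ?_⟩
      veblen_mem := fun x ⟨hx, hx'⟩ y ⟨hy, hy'⟩ => ⟨B.veblen_mem x hx y hy, fun hlt o ho => ?_⟩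
      collapse_mem := fun ζ hζ ⟨hζB, _⟩ => ⟨B.collapse_mem ζ hζ hζB, fun _ o ho => ?_⟩ }
  · rcases (isPrincipal_add_gamma o).le_or_le ho with h | h
    · exact hx' (le_self_add.trans_lt hlt) o h
    · exact hy' (le_add_self.trans_lt hlt) o h
  · rcases (isPrincipal_veblen_gamma o).le_or_le ho with h | h
    · exact hx' ((left_le_veblen x y).trans_lt hlt) o h
    · exact hy' ((right_le_veblen x y).trans_lt hlt) o h
  · rcases ho.eq_or_lt with h | h
    · exact h ▸ B.collapse_mem ζ hζ hζB
    · exact BB_mono hζ.le (mem_BB_of_lt_psiB h)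

theorem mem_BB_of_le {θ η x δ : Ordinal} (hx : x ∈ BB θ η) (hxΩ : x < OmegaB θ) (hδ : δ ≤ x) :
    δ ∈ BB θ η :=
  have B := isBClosed_BB θ η
  mem_of_forall_gamma_le_mem B.zero_mem B.add_mem B.veblen_mem fun _ ho =>
    gamma_mem_BB_of_le hx hxΩ (ho.trans hδ)

theorem stmt12 (θ ξ : Ordinal) (hξ : Order.IsSuccLimit ξ) :
    psiB θ ξ = sSup (psiB θ '' Set.Iio ξ) := by
  obtain ⟨β, hβΩ, hβ⟩ := exists_lt_omegaB_forall_psiB_le θ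
  have hbound : β ∈ upperBounds (psiB θ '' Set.Iio ξ) := Set.forall_mem_image.2 fun η _ => hβ η
  have hsup_lt : sSup (psiB θ '' Set.Iio ξ) < OmegaB θ := (csSup_le' hbound).trans_lt hβΩ
  refine le_antisymm (psiB_le_of_notMem fun hmem => ?_)
    (csSup_le' (Set.forall_mem_image.2 fun η hη => psiB_mono θ (le_of_lt hη)))
  obtain ⟨η, hη, hmemη⟩ := Set.mem_iUnion₂.1 (BB_subset_biUnion_of_isSuccLimit hξ hmem)
  exact psiB_notMem_BB θ η (mem_BB_of_le hmemη hsup_lt (le_csSup ⟨β, hbound⟩ ⟨η, hη, rfl⟩))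
end

section
/- With B the relativised collapsing hierarchy: if α = α₁ + ... + αₙ is the Cantor normal form of α (n > 1, each αᵢ additive principal, α₁ ≥ ... ≥ αₙ), then for every ordinal η, α ∈ B(η) if and only if α₁, ..., αₙ ∈ B(η). -/
open Ordinal

/-!
Apart from addition, every generator of `B(η)` (`0`, `Ω`, `Γ_β`, `φ x y`, `ψ ξ`) is `0` or
additively principal, so its Cantor normal form has at most one term: `φ α β` for `α ≠ 0` is a
fixed point of `ω ^ ·`, `Γ_β` is a value of `φ`, `Ω` is an infinite cardinal, and `ψ ξ` is the
least ordinal outside a set closed under `+`. The normal form of `x + y` is an initial segment of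
that of `x` followed by that of `y`. Hence the elements of `B(η)` whose normal-form terms all lie
in `B(η)` contain the generators and are closed under the operations, so they exhaust `B(η)`;
the converse is closure of `B(η)` under `+`.
-/

theorem Ordinal.IsPrincipal.list_sum_lt {c : Ordinal} (hc : IsPrincipal (· + ·) c) (h0 : 0 < c)
    {m : List Ordinal} (h : ∀ p ∈ m, p < c) : m.sum < c := by
  induction m with
  | nil => exact h0
  | cons p t ih =>
    rw [List.forall_mem_cons] at h
    exact hc h.1 (ih h.2)

/-- Unlike `Ordinal.CNF`, coefficients are unfolded into repeated terms. -/
structure IsCNF (m : List Ordinal) (x : Ordinal) : Prop where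
  opow : ∀ p ∈ m, ∃ γ : Ordinal, p = ω ^ γ
  pairwise : m.Pairwise (· ≥ ·)
  sum_eq : m.sum = x

namespace IsCNF

variable {m m' : List Ordinal} {p q : Ordinal} {x y : Ordinal}

theorem nil : IsCNF [] 0 := ⟨by simp, .nil, rfl⟩

theorem singleton (γ : Ordinal) : IsCNF [ω ^ γ] (ω ^ γ) := ⟨by simp, by simp, by simp⟩

theorem cons (hp : ∃ γ : Ordinal, p = ω ^ γ) (h : IsCNF m y) (hle : ∀ q ∈ m, q ≤ p) :
    IsCNF (p :: m) (p + y) :=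
  ⟨List.forall_mem_cons.2 ⟨hp, h.opow⟩, List.pairwise_cons.2 ⟨hle, h.pairwise⟩,
    by rw [List.sum_cons, h.sum_eq]⟩

theorem tail (h : IsCNF (p :: m) x) : IsCNF m m.sum :=
  ⟨fun q hq => h.opow q (List.mem_cons_of_mem p hq), h.pairwise.of_cons, rfl⟩

theorem le_head (h : IsCNF (p :: m) x) (hq : q ∈ p :: m) : q ≤ p := by
  rcases List.mem_cons.1 hq with rfl | hq
  · exact le_rfl
  · exact List.rel_of_pairwise_cons h.pairwise hq

theorem head_pos (h : IsCNF (p :: m) x) : 0 < p := by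
  obtain ⟨γ, rfl⟩ := h.opow p List.mem_cons_self
  exact opow_pos γ omega0_pos

theorem head_le (h : IsCNF (p :: m) x) : p ≤ x :=
  h.sum_eq ▸ List.le_sum_of_mem List.mem_cons_self

theorem lt_of_head_lt (h : IsCNF (p :: m) x) {γ : Ordinal} (hp : p < ω ^ γ) : x < ω ^ γ :=
  h.sum_eq ▸ IsPrincipal.list_sum_lt (isPrincipal_add_omega0_opow γ) (opow_pos γ omega0_pos)
    fun _ hq => (h.le_head hq).trans_lt hp

theorem unique (h : IsCNF m x) (h' : IsCNF m' x) : m = m' := by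
  induction m generalizing m' x with
  | nil =>
    obtain rfl : x = 0 := h.sum_eq.symm
    cases m' with
    | nil => rfl
    | cons _ _ => exact absurd h'.head_le h'.head_pos.not_ge
  | cons p t ih =>
    cases m' with
    | nil =>
      obtain rfl : x = 0 := h'.sum_eq.symm
      exact absurd h.head_le h.head_pos.not_ge
    | cons q t' =>
      -- a strictly smaller leading power would bound the whole sum by the other leading power
      have hpq : p = q := by
        obtain ⟨γ, rfl⟩ := h.opow p List.mem_cons_self
        obtain ⟨δ, rfl⟩ := h'.opow q List.mem_cons_self
        rcases lt_trichotomy (ω ^ γ) (ω ^ δ) with hlt | heq | hgt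
        · exact absurd h'.head_le (h.lt_of_head_lt hlt).not_ge
        · exact heq
        · exact absurd h.head_le (h'.lt_of_head_lt hgt).not_ge
      subst hpq
      have hsum : t.sum = t'.sum := by
        apply add_left_cancel (a := p)
        rw [← List.sum_cons, ← List.sum_cons, h.sum_eq, h'.sum_eq]
      rw [ih h.tail (hsum ▸ h'.tail)]

theorem eq_of_isPrincipal (hx : IsPrincipal (· + ·) x) (h : IsCNF m x) : ∀ p ∈ m, p = x := by
  rcases isPrincipal_add_iff_zero_or_omega0_opow.1 hx with rfl | ⟨γ, rfl⟩
  · simp [h.unique nil]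
  · simp [h.unique (singleton γ)]

/-- Adding `y` absorbs the terms of the normal form of `x` below the leading term of `y`. -/
theorem add (hx : IsCNF m x) (hy : IsCNF m' y) : ∃ l, l.Sublist m ∧ IsCNF (l ++ m') (x + y) := by
  cases m' with
  | nil => exact ⟨m, .refl m, by simpa [← hy.sum_eq] using hx⟩
  | cons q r =>
    induction m generalizing x with
    | nil => exact ⟨[], .refl [], by simpa [← hx.sum_eq] using hy⟩
    | cons p t ih =>
      by_cases hqp : q ≤ p
      · obtain ⟨l, hl, hly⟩ := ih hx.tail
        refine ⟨p :: l, hl.cons_cons p, ?_⟩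
        rw [← hx.sum_eq, List.sum_cons, add_assoc, List.cons_append]
        refine hly.cons (hx.opow p List.mem_cons_self) fun s hs => ?_
        rcases List.mem_append.1 hs with hs | hs
        · exact hx.le_head (List.mem_cons_of_mem p (hl.subset hs))
        · exact (hy.le_head hs).trans hqp
      · obtain ⟨γ, rfl⟩ := hy.opow q List.mem_cons_self
        refine ⟨[], List.nil_sublist _, ?_⟩
        rw [add_of_omega0_opow_le (hx.lt_of_head_lt (lt_of_not_ge hqp)) hy.head_le]
        exact hy

end IsCNF

theorem exists_isCNF (x : Ordinal) : ∃ m, IsCNF m x := by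
  induction x using WellFoundedLT.induction with
  | _ x ih =>
    rcases eq_or_ne x 0 with rfl | hx
    · exact ⟨[], .nil⟩
    obtain ⟨m, hm⟩ := ih _ (sub_omega0_opow_log_lt hx)
    have hle : ∀ q ∈ m, q ≤ ω ^ log ω x := by
      intro q hq
      obtain ⟨δ, rfl⟩ := hm.opow q hq
      have hδ : ω ^ δ ≤ x := (hm.sum_eq ▸ List.le_sum_of_mem hq).trans (Ordinal.sub_le_self _ _)
      exact opow_le_opow_right omega0_pos (le_log_of_opow_le one_lt_omega0 hδ)
    have h := hm.cons ⟨_, rfl⟩ hle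
    rw [Ordinal.add_sub_cancel_of_le (opow_log_le_self ω hx)] at h
    exact ⟨_, h⟩

theorem veblen_zero_eq_opow (β : Ordinal) : _root_.veblen 0 β = ω ^ β := by
  rw [_root_.veblen, WellFounded.fix_eq, if_pos rfl]

theorem veblen_eq_derivFamily {α : Ordinal.{0}} (hα : α ≠ 0) :
    _root_.veblen α = derivFamily (familyOfBFamily α fun ξ _ => _root_.veblen ξ) := by
  rw [_root_.veblen, WellFounded.fix_eq, if_neg hα]

theorem isPrincipal_add_veblen (α β : Ordinal.{0}) : IsPrincipal (· + ·) (_root_.veblen α β) := by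
  rcases eq_or_ne α 0 with rfl | hα
  · rw [veblen_zero_eq_opow]; exact isPrincipal_add_omega0_opow β
  have h0 : (0 : Ordinal) < α := pos_iff_ne_zero.2 hα
  -- `veblen α β` is a fixed point of `veblen 0 = (ω ^ ·)`
  have hfix := derivFamily_fp
    (f := familyOfBFamily α fun ξ (_ : ξ < α) => _root_.veblen ξ)
    (by
      rw [familyOfBFamily_enum α _ 0 h0]
      exact funext veblen_zero_eq_opow ▸ isNormal_opow one_lt_omega0) β
  rw [familyOfBFamily_enum α _ 0 h0, veblen_zero_eq_opow, ← veblen_eq_derivFamily hα] at hfix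
  rw [← hfix]
  exact isPrincipal_add_omega0_opow _

theorem isPrincipal_add_sInf {s : Set Ordinal} (hs : ∀ o ∈ s, IsPrincipal (· + ·) o) :
    IsPrincipal (· + ·) (sInf s) := by
  rcases s.eq_empty_or_nonempty with rfl | hne
  · rw [Ordinal.sInf_empty]; exact isPrincipal_zero
  · exact hs _ (csInf_mem hne)

theorem isPrincipal_add_sInf_compl {s : Set Ordinal} (hs : ∀ x ∈ s, ∀ y ∈ s, x + y ∈ s) :
    IsPrincipal (· + ·) (sInf sᶜ) := by
  rw [isPrincipal_add_iff_add_lt_ne_self]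
  intro a ha b hb hab
  have hne : sᶜ.Nonempty := by
    by_contra h
    rw [Set.not_nonempty_iff_eq_empty.1 h, Ordinal.sInf_empty] at ha
    exact not_lt_zero ha
  have hmem : a + b ∈ s :=
    hs a (Set.notMem_compl_iff.1 (notMem_of_lt_csInf' ha))
      b (Set.notMem_compl_iff.1 (notMem_of_lt_csInf' hb))
  exact csInf_mem hne (hab ▸ hmem)

theorem isPrincipal_add_Gamma (β : Ordinal) : IsPrincipal (· + ·) (Gamma β) := by
  rw [Gamma, enumOrd]
  refine isPrincipal_add_sInf fun γ hγ => ?_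
  have h := isPrincipal_add_veblen γ 0
  rwa [hγ.1] at h

theorem isPrincipal_add_OmegaB (θ : Ordinal) : IsPrincipal (· + ·) (OmegaB θ) :=
  isPrincipal_add_sInf fun _ ⟨_, hord, hℵ⟩ => hord ▸ isPrincipal_add_ord hℵ.le

section BB

variable {θ η : Ordinal}

theorem zero_mem_BB : (0 : Ordinal) ∈ BB θ η := Set.mem_sInter.2 fun _ hS => hS.1

theorem OmegaB_mem_BB : OmegaB θ ∈ BB θ η := Set.mem_sInter.2 fun _ hS => hS.2.1

theorem Gamma_mem_BB {β : Ordinal} (hβ : β ≤ θ) : Gamma β ∈ BB θ η :=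
  Set.mem_sInter.2 fun _ hS => hS.2.2.1 β hβ

theorem add_mem_BB {x y : Ordinal} (hx : x ∈ BB θ η) (hy : y ∈ BB θ η) : x + y ∈ BB θ η :=
  Set.mem_sInter.2 fun S hS => hS.2.2.2.1 x (hx S hS) y (hy S hS)

theorem veblen_mem_BB {x y : Ordinal} (hx : x ∈ BB θ η) (hy : y ∈ BB θ η) :
    _root_.veblen x y ∈ BB θ η :=
  Set.mem_sInter.2 fun S hS => hS.2.2.2.2.1 x (hx S hS) y (hy S hS)

theorem psiB_mem_BB {ξ : Ordinal} (hξ : ξ < η) (h : ξ ∈ BB θ η) : psiB θ ξ ∈ BB θ η :=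
  Set.mem_sInter.2 fun S hS => hS.2.2.2.2.2 ξ hξ (h S hS)

theorem list_sum_mem_BB {m : List Ordinal} (h : ∀ p ∈ m, p ∈ BB θ η) : m.sum ∈ BB θ η := by
  induction m with
  | nil => exact zero_mem_BB
  | cons p t ih =>
    rw [List.forall_mem_cons] at h
    exact add_mem_BB h.1 (ih h.2)

theorem BB_induction {P : Ordinal → Prop} (zero : P 0) (omega : P (OmegaB θ))
    (gamma : ∀ β ≤ θ, P (Gamma β))
    (add : ∀ x ∈ BB θ η, ∀ y ∈ BB θ η, P x → P y → P (x + y))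
    (veblen : ∀ x ∈ BB θ η, ∀ y ∈ BB θ η, P (_root_.veblen x y))
    (psi : ∀ ξ < η, ξ ∈ BB θ η → P (psiB θ ξ)) {x : Ordinal} (hx : x ∈ BB θ η) : P x := by
  suffices h : BB θ η ⊆ {x | x ∈ BB θ η ∧ P x} from (h hx).2
  exact Set.sInter_subset_of_mem ⟨⟨zero_mem_BB, zero⟩, ⟨OmegaB_mem_BB, omega⟩,
    fun β hβ => ⟨Gamma_mem_BB hβ, gamma β hβ⟩,
    fun x hx y hy => ⟨add_mem_BB hx.1 hy.1, add x hx.1 y hy.1 hx.2 hy.2⟩,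
    fun x hx y hy => ⟨veblen_mem_BB hx.1 hy.1, veblen x hx.1 y hy.1⟩,
    fun ξ hξ hξB => ⟨psiB_mem_BB hξ hξB.1, psi ξ hξ hξB.1⟩⟩

theorem psiB_eq_sInf (ξ : Ordinal) : psiB θ ξ = sInf (BB θ ξ)ᶜ := by
  rw [psiB, WellFounded.fix_eq]
  rfl

theorem isPrincipal_add_psiB (ξ : Ordinal) : IsPrincipal (· + ·) (psiB θ ξ) := by
  rw [psiB_eq_sInf]
  exact isPrincipal_add_sInf_compl fun _ hx _ hy => add_mem_BB hx hy

end BB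

theorem IsCNF.forall_mem_BB {θ η x : Ordinal} {m : List Ordinal} (hm : IsCNF m x)
    (hx : x ∈ BB θ η) : ∀ p ∈ m, p ∈ BB θ η := by
  revert m
  let P (x : Ordinal) : Prop := ∀ m, IsCNF m x → ∀ p ∈ m, p ∈ BB θ η
  have of_isPrincipal {x} (hxB : x ∈ BB θ η) (hx : IsPrincipal (· + ·) x) : P x :=
    fun _ hm p hp => hm.eq_of_isPrincipal hx p hp ▸ hxB
  refine BB_induction (P := P) (of_isPrincipal zero_mem_BB isPrincipal_zero) ?_ ?_ ?_ ?_ ?_ hx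
  · exact of_isPrincipal OmegaB_mem_BB (isPrincipal_add_OmegaB θ)
  · exact fun β hβ => of_isPrincipal (Gamma_mem_BB hβ) (isPrincipal_add_Gamma β)
  · intro x _ y _ hxP hyP m hm p hp
    obtain ⟨mx, hmx⟩ := exists_isCNF x
    obtain ⟨my, hmy⟩ := exists_isCNF y
    obtain ⟨l, hl, hsum⟩ := hmx.add hmy
    rw [hm.unique hsum, List.mem_append] at hp
    exact hp.elim (fun hp => hxP mx hmx p (hl.subset hp)) (hyP my hmy p)
  · exact fun x hx y hy => of_isPrincipal (veblen_mem_BB hx hy) (isPrincipal_add_veblen x y)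
  · exact fun ξ hξ hξB => of_isPrincipal (psiB_mem_BB hξ hξB) (isPrincipal_add_psiB ξ)

theorem stmt16_general (θ η α : Ordinal) (l : List Ordinal)
    (hprinc : ∀ x ∈ l, ∃ γ, x = Ordinal.omega0 ^ γ)
    (hsorted : l.Pairwise (· ≥ ·)) (hsum : α = l.foldr (· + ·) 0) :
    α ∈ BB θ η ↔ ∀ x ∈ l, x ∈ BB θ η := by
  have hopow : ∀ p ∈ l, ∃ γ : Ordinal, p = ω ^ γ := fun p hp => by
    obtain ⟨n, rfl⟩ := hprinc p hp
    exact ⟨n, (opow_natCast ω n).symm⟩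
  have hl : IsCNF l α := ⟨hopow, hsorted, hsum.symm⟩
  exact ⟨hl.forall_mem_BB, fun h => hsum ▸ list_sum_mem_BB h⟩

theorem stmt16 (θ η α : Ordinal) (l : List Ordinal) (hn : 1 < l.length)
    (hprinc : ∀ x ∈ l, ∃ γ, x = Ordinal.omega0 ^ γ)
    (hsorted : l.Pairwise (· ≥ ·)) (hsum : α = l.foldr (· + ·) 0) :
    α ∈ BB θ η ↔ ∀ x ∈ l, x ∈ BB θ η :=
  stmt16_general θ η α l hprinc hsorted hsum
end
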